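/- Let H ∈ ℝ^{d×d} be a symmetric matrix, let x ∈ ℝ^d, and let x⁺ = x − H∇f(x). Setting Ĥ = H_*^{1/2} H H_*^{1/2}, σ = (M/μ^{3/2})‖H_*^{1/2}(x − x_*)‖ and σ⁺ = (M/μ^{3/2})‖H_*^{1/2}(x⁺ − x_*)‖, one has σ⁺ ≤ (‖Ĥ‖·σ + ‖I − Ĥ‖)·σ. -/

import Mathlib

noncomputable section

open Matrix Finset

abbrev E (d : ℕ) := EuclideanSpace ℝ (Fin d)
abbrev Mat (d : ℕ) := Matrix (Fin d) (Fin d) ℝ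

/-- Spectral (operator 2-) norm of a real matrix. -/
def spec {d : ℕ} (A : Mat d) : ℝ := ‖Matrix.toEuclideanCLM (𝕜 := ℝ) A‖

/-- Frobenius norm of a real matrix. -/
def frob {d : ℕ} (A : Mat d) : ℝ := Real.sqrt (∑ i, ∑ j, (A i j) ^ 2)

/-- A matrix acting on a Euclidean vector. -/
def mApp {d : ℕ} (A : Mat d) (v : E d) : E d := Matrix.toEuclideanCLM (𝕜 := ℝ) A v

/-- Outer product `u vᵀ`. -/
def outer {d : ℕ} (u v : E d) : Mat d := Matrix.of fun i j => u i * v j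

/-- Euclidean dot product. -/
def dot {d : ℕ} (u v : E d) : ℝ := ∑ i, u i * v i

/-- `σ(x) = (M/μ^{3/2})·‖H_*^{1/2}(x − x_*)‖`. -/
def sig {d : ℕ} (M μ : ℝ) (sqH : Mat d) (xs x : E d) : ℝ :=
  M / μ ^ ((3:ℝ)/2) * ‖mApp sqH (x - xs)‖

/-!
With `h = x − x_*`, `T = H_*^{1/2}` and `Ĥ = T H T`, write `∇f(x) = H_* h + r`, where the mean value
inequality and Hessian Lipschitz continuity at `x_*` give `‖r‖ ≤ M‖h‖²`. Solving `r = T u`,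
`T(x⁺ − x_*) = (I − Ĥ)(T h) − Ĥ u`. Strong convexity at `x_*` gives `‖T v‖ ≥ √μ ‖v‖`, hence
`‖u‖ ≤ M‖h‖²/√μ ≤ (M/μ^{3/2}) ‖T h‖²`, and multiplying by `M/μ^{3/2}` yields
`σ⁺ ≤ ‖Ĥ‖σ² + ‖I − Ĥ‖σ`.
-/

open InnerProductSpace RealInnerProductSpace

lemma dot_eq_inner {d : ℕ} (u v : E d) : dot u v = ⟪u, v⟫ := by
  simp only [dot, PiLp.inner_apply, RCLike.inner_apply, conj_trivial, mul_comm]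

lemma Matrix.IsHermitian.isSelfAdjoint_toEuclideanCLM {n : Type*} [Fintype n] [DecidableEq n]
    {A : Matrix n n ℝ} (hA : A.IsHermitian) : IsSelfAdjoint (toEuclideanCLM (𝕜 := ℝ) A) := by
  rw [IsSelfAdjoint, ← map_star, star_eq_conjTranspose, hA.eq]

section InnerProductSpace

variable {F : Type*} [NormedAddCommGroup F] [InnerProductSpace ℝ F] [CompleteSpace F]

lemma IsSelfAdjoint.inner_apply_apply {T : F →L[ℝ] F} (hT : IsSelfAdjoint T) (v : F) :
    ⟪v, T (T v)⟫ = ‖T v‖ ^ 2 := by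
  rw [← ContinuousLinearMap.adjoint_inner_left, hT.adjoint_eq, real_inner_self_eq_norm_sq]

lemma IsSelfAdjoint.sqrt_mul_norm_le_norm_apply {T : F →L[ℝ] F} (hT : IsSelfAdjoint T) {μ : ℝ}
    (hμ : ∀ v, μ * ‖v‖ ^ 2 ≤ ⟪v, T (T v)⟫) (v : F) : √μ * ‖v‖ ≤ ‖T v‖ := by
  rw [← Real.sqrt_sq (norm_nonneg v), ← Real.sqrt_mul' _ (sq_nonneg _),
    ← Real.sqrt_sq (norm_nonneg (T v))]
  exact Real.sqrt_le_sqrt ((hμ v).trans_eq (hT.inner_apply_apply v))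

lemma IsLocalMin.hasGradientAt_eq_zero {f : F → ℝ} {a g : F} (h : IsLocalMin f a)
    (hg : HasGradientAt f g a) : g = 0 := by
  simpa using congrArg (toDual ℝ F).symm (h.hasFDerivAt_eq_zero hg.hasFDerivAt)

end InnerProductSpace

lemma le_div_rpow_three_halves_mul_sq {μ M a b c : ℝ} (hμ : 0 < μ) (hM : 0 ≤ M) (hb : 0 ≤ b)
    (ha : √μ * a ≤ M * b ^ 2) (hbc : √μ * b ≤ c) : a ≤ M / μ ^ ((3 : ℝ) / 2) * c ^ 2 := by
  have hpow : μ ^ ((3 : ℝ) / 2) = μ * √μ := by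
    rw [show (3 : ℝ) / 2 = 1 + 1 / 2 by norm_num, Real.rpow_add hμ, Real.rpow_one,
      Real.sqrt_eq_rpow]
  have hb2 : μ * b ^ 2 ≤ c ^ 2 := by
    calc μ * b ^ 2 = (√μ * b) ^ 2 := by rw [mul_pow, Real.sq_sqrt hμ.le]
      _ ≤ c ^ 2 := pow_le_pow_left₀ (by positivity) hbc 2
  rw [hpow, div_mul_eq_mul_div, le_div_iff₀ (by positivity)]
  calc a * (μ * √μ) = μ * (√μ * a) := by ring
    _ ≤ μ * (M * b ^ 2) := mul_le_mul_of_nonneg_left ha hμ.le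
    _ = M * (μ * b ^ 2) := by ring
    _ ≤ M * c ^ 2 := mul_le_mul_of_nonneg_left hb2 hM

section NormedSpace

variable {F G : Type*} [NormedAddCommGroup F] [NormedSpace ℝ F]
  [NormedAddCommGroup G] [NormedSpace ℝ G]

lemma ContinuousLinearMap.exists_apply_eq_mul_norm_le [FiniteDimensional ℝ F] {T : F →L[ℝ] F}
    {c : ℝ} (hc : 0 < c) (hT : ∀ v, c * ‖v‖ ≤ ‖T v‖) (r : F) : ∃ u, T u = r ∧ c * ‖u‖ ≤ ‖r‖ := by
  have hinj : Function.Injective T := by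
    refine (injective_iff_map_eq_zero T).2 fun v hv => norm_le_zero_iff.1 ?_
    have := hT v
    rw [hv, norm_zero] at this
    nlinarith [norm_nonneg v]
  obtain ⟨u, rfl⟩ := LinearMap.surjective_of_injective (f := (T : F →ₗ[ℝ] F)) hinj r
  exact ⟨u, rfl, hT u⟩

lemma norm_image_sub_sub_fderiv_le {g : F → G} {g' : F → F →L[ℝ] G} {x₀ : F} {M : ℝ}
    (hM : 0 ≤ M) (hg : ∀ y, HasFDerivAt g (g' y) y) (hg' : ∀ y, ‖g' y - g' x₀‖ ≤ M * ‖y - x₀‖)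
    (x : F) : ‖g x - g x₀ - g' x₀ (x - x₀)‖ ≤ M * ‖x - x₀‖ * ‖x - x₀‖ := by
  refine (convex_closedBall x₀ ‖x - x₀‖).norm_image_sub_le_of_norm_hasFDerivWithin_le'
    (fun y _ => (hg y).hasFDerivWithinAt) (fun y hy => (hg' y).trans ?_)
    (Metric.mem_closedBall_self (norm_nonneg _)) (by simp [dist_eq_norm])
  exact mul_le_mul_of_nonneg_left (by simpa [dist_eq_norm] using hy) hM

lemma ContinuousLinearMap.norm_apply_sub_apply_add_le (T B : F →L[ℝ] F) (h u : F) :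
    ‖T (h - B (T (T h) + T u))‖ ≤ ‖1 - T * B * T‖ * ‖T h‖ + ‖T * B * T‖ * ‖u‖ := by
  have hsplit : T (h - B (T (T h) + T u)) = (1 - T * B * T) (T h) - (T * B * T) u := by
    simp only [map_add, map_sub, _root_.sub_apply, one_apply_eq_self, mul_apply_eq_comp]
    abel
  rw [hsplit]
  exact (norm_sub_le _ _).trans (add_le_add ((1 - T * B * T).le_opNorm _) ((T * B * T).le_opNorm _))

lemma ContinuousLinearMap.preconditioned_step_error_le [FiniteDimensional ℝ F]
    {T B : F →L[ℝ] F} {μ M : ℝ} (hμ : 0 < μ) (hM : 0 ≤ M) (hT : ∀ v, √μ * ‖v‖ ≤ ‖T v‖) {h r : F} (hr : ‖r - T (T h)‖ ≤ M * ‖h‖ ^ 2) :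
    M / μ ^ ((3 : ℝ) / 2) * ‖T (h - B r)‖ ≤
      (‖T * B * T‖ * (M / μ ^ ((3 : ℝ) / 2) * ‖T h‖) + ‖1 - T * B * T‖) *
        (M / μ ^ ((3 : ℝ) / 2) * ‖T h‖) := by
  set k := M / μ ^ ((3 : ℝ) / 2)
  obtain ⟨u, hu, hu_le⟩ := exists_apply_eq_mul_norm_le (Real.sqrt_pos.2 hμ) hT (r - T (T h))
  have hu_sq : ‖u‖ ≤ k * ‖T h‖ ^ 2 :=
    le_div_rpow_three_halves_mul_sq hμ hM (norm_nonneg h) (hu_le.trans hr) (hT h)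
  have hstep : ‖T (h - B r)‖ ≤ ‖1 - T * B * T‖ * ‖T h‖ + ‖T * B * T‖ * ‖u‖ := by
    rw [show r = T (T h) + T u by rw [hu, add_sub_cancel]]
    exact norm_apply_sub_apply_add_le T B h u
  calc k * ‖T (h - B r)‖
      ≤ k * (‖1 - T * B * T‖ * ‖T h‖ + ‖T * B * T‖ * (k * ‖T h‖ ^ 2)) := by
        gcongr
        exact hstep.trans (by gcongr)
    _ = (‖T * B * T‖ * (k * ‖T h‖) + ‖1 - T * B * T‖) * (k * ‖T h‖) := by ring

end NormedSpace

theorem newton_like_step_contraction_H_general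
    {d : ℕ}
    (f : E d → ℝ) (g : E d → E d) (Hess : E d → Mat d) (xs : E d)
    (μ M : ℝ) (hμ : 0 < μ) (hM : 0 < M)
    -- `g` is the gradient of `f`, and `Hess` its Hessian (so `f` is twice differentiable)
    (hg : ∀ x, HasGradientAt f (g x) x)
    (hHd : ∀ x, HasFDerivAt g (Matrix.toEuclideanCLM (𝕜 := ℝ) (Hess x)) x)
    -- `xs` is the unique minimizer of `f`
    (hmin : ∀ x, f xs ≤ f x)
    -- Assumption 1: strong convexity and gradient Lipschitz continuity
    (hHl : ∀ x v, μ * ‖v‖ ^ 2 ≤ dot v (mApp (Hess x) v))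
    -- Assumption 2: Hessian Lipschitz continuity toward the optimum
    (hLip : ∀ x, spec (Hess x - Hess xs) ≤ M * ‖x - xs‖)
    -- `sqH` is the positive definite square root `H_*^{1/2}` of `H_* = ∇²f(x_*)`
    (sqH : Mat d) (hsqH : sqH.PosDef) (hsqH2 : sqH * sqH = Hess xs)
    (Hm : Mat d)
    (x : E d) :
    sig M μ sqH xs (x - mApp Hm (g x)) ≤
      (spec (sqH * Hm * sqH) * sig M μ sqH xs x + spec (1 - sqH * Hm * sqH)) *
        sig M μ sqH xs x := by
  set T := toEuclideanCLM (𝕜 := ℝ) sqH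
  set B := toEuclideanCLM (𝕜 := ℝ) Hm
  have hHess : toEuclideanCLM (𝕜 := ℝ) (Hess xs) = T * T := by rw [← hsqH2, map_mul]
  have hT : ∀ v, √μ * ‖v‖ ≤ ‖T v‖ :=
    hsqH.1.isSelfAdjoint_toEuclideanCLM.sqrt_mul_norm_le_norm_apply fun v => by
      simpa [dot_eq_inner, mApp, hHess] using hHl xs v
  have hg0 : g xs = 0 := IsLocalMin.hasGradientAt_eq_zero (.of_forall hmin) (hg xs)
  have htaylor : ‖g x - T (T (x - xs))‖ ≤ M * ‖x - xs‖ ^ 2 := by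
    have := norm_image_sub_sub_fderiv_le (x₀ := xs) hM.le hHd
      (fun y => by rw [← map_sub]; exact hLip y) x
    rw [hg0, sub_zero, hHess] at this
    exact this.trans_eq (by ring)
  have hspec : spec (sqH * Hm * sqH) = ‖T * B * T‖ := by rw [spec, map_mul, map_mul]
  have hspec_sub : spec (1 - sqH * Hm * sqH) = ‖1 - T * B * T‖ := by
    rw [spec, map_sub, map_one, map_mul, map_mul]
  rw [sig, sig, mApp, mApp, sub_right_comm, hspec, hspec_sub]
  exact ContinuousLinearMap.preconditioned_step_error_le hμ hM.le hT htaylor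

theorem newton_like_step_contraction_H
    {d : ℕ}
    (f : E d → ℝ) (g : E d → E d) (Hess : E d → Mat d) (xs : E d)
    (μ L M : ℝ) (hμ : 0 < μ) (hμL : μ ≤ L) (hM : 0 < M)
    -- `g` is the gradient of `f`, and `Hess` its Hessian (so `f` is twice differentiable)
    (hg : ∀ x, HasGradientAt f (g x) x)
    (hHd : ∀ x, HasFDerivAt g (Matrix.toEuclideanCLM (𝕜 := ℝ) (Hess x)) x)
    -- `xs` is the unique minimizer of `f`
    (hmin : ∀ x, f xs ≤ f x)
    (huniq : ∀ x, (∀ y, f x ≤ f y) → x = xs)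
    -- Assumption 1: strong convexity and gradient Lipschitz continuity
    (hgl : ∀ x y, μ * ‖x - y‖ ≤ ‖g x - g y‖)
    (hgu : ∀ x y, ‖g x - g y‖ ≤ L * ‖x - y‖)
    (hHl : ∀ x v, μ * ‖v‖ ^ 2 ≤ dot v (mApp (Hess x) v))
    (hHu : ∀ x v, dot v (mApp (Hess x) v) ≤ L * ‖v‖ ^ 2)
    -- Assumption 2: Hessian Lipschitz continuity toward the optimum
    (hLip : ∀ x, spec (Hess x - Hess xs) ≤ M * ‖x - xs‖)
    -- `sqH` is the positive definite square root `H_*^{1/2}` of `H_* = ∇²f(x_*)`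
    (sqH : Mat d) (hsqH : sqH.PosDef) (hsqH2 : sqH * sqH = Hess xs)
    (Hm : Mat d) (hHm : Hm.IsSymm)
    (x : E d) :
    sig M μ sqH xs (x - mApp Hm (g x)) ≤
      (spec (sqH * Hm * sqH) * sig M μ sqH xs x + spec (1 - sqH * Hm * sqH)) *
        sig M μ sqH xs x :=
  newton_like_step_contraction_H_general f g Hess xs μ M hμ hM hg hHd hmin hHl hLip sqH hsqH hsqH2
    Hm x
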